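/- Let G be a 4-Ore graph with p(G) = 1.8 and let v be a vertex of G. Then every maximum independent set of D3(G) contains a vertex of the closed neighborhood of v in G. -/

import Mathlib

open SimpleGraph

/-- The degree of a vertex, as the cardinality of its neighbor set. -/
noncomputable def deg {V : Type} (G : SimpleGraph V) (v : V) : ℕ :=
  Nat.card (G.neighborSet v)

/-- The number of edges of a graph. -/
noncomputable def numEdges {V : Type} (G : SimpleGraph V) : ℕ :=
  Nat.card G.edgeSet

/-- The independence number of a graph. -/
noncomputable def indepNum {V : Type} (G : SimpleGraph V) : ℕ :=
  sSup {n | ∃ s : Set V, (∀ u ∈ s, ∀ v ∈ s, ¬ G.Adj u v) ∧ s.ncard = n}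

/-- The set of vertices of degree at most three. -/
noncomputable def D3set {V : Type} (G : SimpleGraph V) : Set V :=
  {v | deg G v ≤ 3}

/-- `D3(G)`: the subgraph induced by the vertices of degree at most three. -/
noncomputable def D3 {V : Type} (G : SimpleGraph V) : SimpleGraph (D3set G) :=
  G.induce (D3set G)

/-- The potential of a graph: `p(G) = 4.8 |V(G)| - 3 |E(G)| + 0.6 α(D3(G))`. -/
noncomputable def potential {V : Type} (G : SimpleGraph V) : ℚ :=
  (24/5 : ℚ) * Nat.card V - 3 * numEdges G + (3/5 : ℚ) * _root_.indepNum (D3 G)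

/-- The potential of a subset `R` of the vertices of `G`:
`p(R) = 4.8 |R| - 3 |E(G[R])| + 0.6 α(G[D3(G) ∩ R])`. -/
noncomputable def potentialOf {V : Type} (G : SimpleGraph V) (R : Set V) : ℚ :=
  (24/5 : ℚ) * R.ncard - 3 * numEdges (G.induce R)
    + (3/5 : ℚ) * _root_.indepNum (G.induce (D3set G ∩ R))

/-- A graph is `k`-critical if it is not `(k-1)`-colorable but every proper
subgraph is `(k-1)`-colorable. -/
def IsKCritical {V : Type} (G : SimpleGraph V) (k : ℕ) : Prop :=
  ¬ G.Colorable (k - 1) ∧ ∀ H : SimpleGraph V, H ≤ G → H ≠ G → H.Colorable (k - 1)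

/-- A graph has Ore-degree at most `d` if `d(u) + d(v) ≤ d` for every edge `uv`. -/
def OreDegreeAtMost {V : Type} (G : SimpleGraph V) (d : ℕ) : Prop :=
  ∀ u v, G.Adj u v → deg G u + deg G v ≤ d

/-- The Ore-composition of `G1` (edge-side, with replaced edge `xy`) and `G2`
(split-side, with split vertex `z` whose incident edges going to `A` are attached
to `x` and the remaining ones to `y`). -/
def oreCompose {V1 V2 : Type} (G1 : SimpleGraph V1) (G2 : SimpleGraph V2)
    (x y : V1) (z : V2) (A : Set V2) :
    SimpleGraph (V1 ⊕ {v : V2 // v ≠ z}) :=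
  SimpleGraph.fromRel (fun a b =>
    match a, b with
    | Sum.inl u, Sum.inl v =>
        G1.Adj u v ∧ ¬((u = x ∧ v = y) ∨ (u = y ∧ v = x))
    | Sum.inl u, Sum.inr v =>
        (u = x ∧ G2.Adj z v.1 ∧ v.1 ∈ A) ∨ (u = y ∧ G2.Adj z v.1 ∧ v.1 ∉ A)
    | Sum.inr _, Sum.inl _ => False
    | Sum.inr u, Sum.inr v => G2.Adj u.1 v.1)

/-- `G` is an Ore-composition of `G1` and `G2`: there are a replaced edge `xy` of
`G1`, a split vertex `z` of `G2`, and a splitting of the edges at `z` into two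
nonempty parts, such that `G` is isomorphic to the resulting composition. -/
def IsOreComposition {V V1 V2 : Type} (G : SimpleGraph V)
    (G1 : SimpleGraph V1) (G2 : SimpleGraph V2) : Prop :=
  ∃ (x y : V1) (z : V2) (A : Set V2),
    G1.Adj x y ∧ (∃ p, G2.Adj z p ∧ p ∈ A) ∧ (∃ q, G2.Adj z q ∧ q ∉ A) ∧
    Nonempty (G ≃g oreCompose G1 G2 x y z A)

/-- The family of `4`-Ore graphs: the smallest family of graphs containing `K4`
and closed under Ore-compositions. -/
inductive IsFourOre : ∀ {V : Type}, SimpleGraph V → Prop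
  | k4 {V : Type} (G : SimpleGraph V) :
      Nonempty (G ≃g completeGraph (Fin 4)) → IsFourOre G
  | comp {V V1 V2 : Type} (G : SimpleGraph V)
      (G1 : SimpleGraph V1) (G2 : SimpleGraph V2) :
      IsFourOre G1 → IsFourOre G2 → IsOreComposition G G1 G2 → IsFourOre G

/-- The boundary of a set `R`: the vertices of `R` with a neighbor outside `R`. -/
def boundary {V : Type} (G : SimpleGraph V) (R : Set V) : Set V :=
  {v | v ∈ R ∧ ∃ u, u ∉ R ∧ G.Adj v u}

/-- A proper subset `R` of the vertices with `|R| ≥ 2` is collapsible if in every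
proper 3-coloring of `G[R]` all vertices of the boundary of `R` get the same color. -/
def Collapsible {V : Type} (G : SimpleGraph V) (R : Set V) : Prop :=
  R ≠ Set.univ ∧ 2 ≤ R.ncard ∧
  ∀ φ : V → Fin 3, (∀ u ∈ R, ∀ v ∈ R, G.Adj u v → φ u ≠ φ v) →
    ∀ u ∈ boundary G R, ∀ v ∈ boundary G R, φ u = φ v

/-- The critical complement of a set `R`: identify the boundary of `R` to a single
vertex (the vertex `none`) and delete the rest of `R`. -/
def criticalComplement {V : Type} (G : SimpleGraph V) (R : Set V) :
    SimpleGraph (Option {v : V // v ∉ R}) :=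
  SimpleGraph.fromRel (fun a b =>
    match a, b with
    | some u, some v => G.Adj u.1 v.1
    | some u, none => ∃ w ∈ boundary G R, G.Adj u.1 w
    | none, some _ => False
    | none, none => False)

/-- A nonempty proper subset `R` with boundary `S` is cocollapsible if every vertex
of `S` has exactly one neighbor outside `R`, and for every non-constant list of
forbidden colors on `S` there is a proper 3-coloring of `G[R]` avoiding them. -/
def Cocollapsible {V : Type} (G : SimpleGraph V) (R : Set V) : Prop :=
  R.Nonempty ∧ R ≠ Set.univ ∧
  (∀ v ∈ boundary G R, ∃! u, u ∉ R ∧ G.Adj v u) ∧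
  ∀ f : V → Fin 3,
    (∃ u ∈ boundary G R, ∃ v ∈ boundary G R, f u ≠ f v) →
    ∃ φ : V → Fin 3, (∀ u ∈ R, ∀ v ∈ R, G.Adj u v → φ u ≠ φ v) ∧
      ∀ v ∈ boundary G R, φ v ≠ f v

/-- A cocollapsible set is nontrivial if its complement has more than one vertex. -/
def NontrivialCocollapsible {V : Type} (G : SimpleGraph V) (R : Set V) : Prop :=
  Cocollapsible G R ∧ 1 < (Rᶜ : Set V).ncard

/-- The graph `H` together with the (possibly new) edge `uv`. -/
def withEdge {W : Type} (H : SimpleGraph W) (u v : W) : SimpleGraph W :=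
  H ⊔ SimpleGraph.fromEdgeSet {s(u, v)}

/-- A collapsible set `R` is tight if for any two distinct boundary vertices `u, v`
the graph `G[R] + uv` is `4`-critical. -/
def TightCollapsible {V : Type} (G : SimpleGraph V) (R : Set V) : Prop :=
  Collapsible G R ∧
  ∀ u (hu : u ∈ boundary G R) v (hv : v ∈ boundary G R), u ≠ v →
    IsKCritical (withEdge (G.induce R) ⟨u, hu.1⟩ ⟨v, hv.1⟩) 4

/-- `s(H) = |E(H)| - |V(H)| + α(H)`. -/
noncomputable def sVal {V : Type} (H : SimpleGraph V) : ℤ :=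
  (numEdges H : ℤ) - (Nat.card V : ℤ) + (_root_.indepNum H : ℤ)

/-- `H7`: the unique Ore-composition of two copies of `K4`. Vertices `0,1,2,3`
form the edge-side `K4` with replaced edge `01`; the split vertex of the second
`K4` on `{z,4,5,6}` is split so that `0` gets the edge to `4` and `1` gets the
edges to `5` and `6`. -/
def H7 : SimpleGraph (Fin 7) :=
  SimpleGraph.fromRel (fun a b =>
    ((a, b) : Fin 7 × Fin 7) ∈
      ([(0, 2), (0, 3), (1, 2), (1, 3), (2, 3), (4, 5), (4, 6), (5, 6),
        (0, 4), (1, 5), (1, 6)] : List (Fin 7 × Fin 7)))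

/-- A diamond in `G`: a subgraph isomorphic to `K4` minus an edge whose two
vertices of degree three within the subgraph (`w1` and `w2`) also have degree
three in `G`.  The vertices `e1` and `e2` are the ends of the diamond. -/
def IsDiamond {V : Type} (G : SimpleGraph V) (e1 e2 w1 w2 : V) : Prop :=
  e1 ≠ e2 ∧ e1 ≠ w1 ∧ e1 ≠ w2 ∧ e2 ≠ w1 ∧ e2 ≠ w2 ∧ w1 ≠ w2 ∧
  G.Adj w1 w2 ∧ G.Adj e1 w1 ∧ G.Adj e1 w2 ∧ G.Adj e2 w1 ∧ G.Adj e2 w2 ∧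
  deg G w1 = 3 ∧ deg G w2 = 3

/-- A triangle with a pendant edge. -/
def trianglePendant1 : SimpleGraph (Fin 4) :=
  SimpleGraph.fromRel (fun a b =>
    ((a, b) : Fin 4 × Fin 4) ∈ ([(0, 1), (1, 2), (2, 0), (0, 3)] : List (Fin 4 × Fin 4)))

/-- A triangle with a pendant path on two further vertices. -/
def trianglePendant2 : SimpleGraph (Fin 5) :=
  SimpleGraph.fromRel (fun a b =>
    ((a, b) : Fin 5 × Fin 5) ∈
      ([(0, 1), (1, 2), (2, 0), (0, 3), (3, 4)] : List (Fin 5 × Fin 5)))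

/-! A 4-Ore graph on `n` vertices has exactly `(5n - 2)/3` edges and no independent set
with more than `(n - 1)/3` vertices; both facts survive an Ore-composition, which glues
`n₁ + n₂ - 1` vertices and `e₁ + e₂ - 1` edges, and an independent set of the composition
splits into independent sets of the two parts of no smaller total size. With the edge count,
`p(G) = 9/5` says `n = 3 α(D3(G)) + 1`. A maximum independent set `I` of `D3(G)` missing the
closed neighbourhood of `v` would extend to the independent set `I ∪ {v}` of `G`, of size
`α(D3(G)) + 1 > (n - 1)/3`. -/

theorem Set.ncard_preimage_inl_add_ncard_preimage_inr {α β : Type*} [Finite α] [Finite β]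
    (s : Set (α ⊕ β)) : (Sum.inl ⁻¹' s).ncard + (Sum.inr ⁻¹' s).ncard = s.ncard := by
  conv_rhs => rw [← Set.image_preimage_inl_union_image_preimage_inr s]
  rw [Set.ncard_union_eq Set.disjoint_image_inl_image_inr,
    Set.ncard_image_of_injective _ Sum.inl_injective,
    Set.ncard_image_of_injective _ Sum.inr_injective]

theorem Nat.card_subtype_ne_add_one {α : Type*} [Finite α] (a : α) :
    Nat.card {b : α // b ≠ a} + 1 = Nat.card α := by
  rw [← Set.ncard_compl_add_ncard {a}, Set.ncard_singleton, ← Nat.card_coe_set_eq]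
  rfl

theorem SimpleGraph.IsIndepSet.not_adj {α : Type*} {G : SimpleGraph α} {s : Set α}
    (hs : G.IsIndepSet s) {a b : α} (ha : a ∈ s) (hb : b ∈ s) : ¬ G.Adj a b :=
  fun hab => hs ha hb hab.ne hab

theorem SimpleGraph.Iso.isIndepSet_image {α β : Type*} {G : SimpleGraph α} {H : SimpleGraph β}
    (e : G ≃g H) {s : Set α} (hs : G.IsIndepSet s) : H.IsIndepSet (e '' s) := by
  rintro - ⟨a, ha, rfl⟩ - ⟨b, hb, rfl⟩ - hab
  exact hs.not_adj ha hb (e.map_adj_iff.mp hab)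

theorem ncard_le_one_of_isIndepSet_of_iso_top {α β : Type*} {G : SimpleGraph α}
    (e : G ≃g (⊤ : SimpleGraph β)) {s : Set α} (hs : G.IsIndepSet s) : s.ncard ≤ 1 := by
  have hsub : s.Subsingleton := fun a ha b hb => by_contra fun hab =>
    hs.not_adj ha hb (e.map_adj_iff.mp ((top_adj _ _).mpr (e.injective.ne hab)))
  exact (Set.ncard_le_one hsub.finite).mpr fun a ha b hb => hsub ha hb

section OreCompose

variable {V1 V2 : Type} {G1 : SimpleGraph V1} {G2 : SimpleGraph V2} {x y : V1} {z : V2}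
  {A : Set V2}

@[simp] theorem oreCompose_adj_inl_inl {u v : V1} :
    (oreCompose G1 G2 x y z A).Adj (Sum.inl u) (Sum.inl v) ↔
      G1.Adj u v ∧ ¬((u = x ∧ v = y) ∨ (u = y ∧ v = x)) := by
  rw [oreCompose, fromRel_adj]
  constructor
  · rintro ⟨-, h | h⟩
    · exact h
    · exact ⟨h.1.symm, fun hc => h.2 (by tauto)⟩
  · rintro ⟨hadj, hxy⟩
    exact ⟨by simpa using hadj.ne, Or.inl ⟨hadj, hxy⟩⟩

@[simp] theorem oreCompose_adj_inl_inr {u : V1} {w : {v : V2 // v ≠ z}} :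
    (oreCompose G1 G2 x y z A).Adj (Sum.inl u) (Sum.inr w) ↔
      (u = x ∧ G2.Adj z w ∧ w.1 ∈ A) ∨ (u = y ∧ G2.Adj z w ∧ w.1 ∉ A) := by
  rw [oreCompose, fromRel_adj]
  exact ⟨fun ⟨_, h⟩ => h.resolve_right id, fun h => ⟨by simp, Or.inl h⟩⟩

@[simp] theorem oreCompose_adj_inr_inr {w1 w2 : {v : V2 // v ≠ z}} :
    (oreCompose G1 G2 x y z A).Adj (Sum.inr w1) (Sum.inr w2) ↔ G2.Adj w1 w2 := by
  rw [oreCompose, fromRel_adj]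
  refine ⟨fun ⟨_, h⟩ => h.elim id fun h' => h'.symm, fun h => ⟨?_, Or.inl h⟩⟩
  simpa [Subtype.ext_iff] using h.ne

theorem card_oreCompose_add_one [Finite V1] [Finite V2] (z : V2) :
    Nat.card (V1 ⊕ {v : V2 // v ≠ z}) + 1 = Nat.card V1 + Nat.card V2 := by
  rw [Nat.card_sum, add_assoc, Nat.card_subtype_ne_add_one]

theorem oreCompose_isIndepSet_split [Finite V1] [Finite V2] {T : Set (V1 ⊕ {v : V2 // v ≠ z})}
    (hT : (oreCompose G1 G2 x y z A).IsIndepSet T) :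
    ∃ (S1 : Set V1) (S2 : Set V2), G1.IsIndepSet S1 ∧ G2.IsIndepSet S2 ∧
      T.ncard ≤ S1.ncard + S2.ncard := by
  set T1 : Set V1 := Sum.inl ⁻¹' T
  set T2 : Set V2 := Subtype.val '' (Sum.inr ⁻¹' T)
  have hcard : T.ncard = T1.ncard + T2.ncard := by
    rw [← T.ncard_preimage_inl_add_ncard_preimage_inr,
      Set.ncard_image_of_injective _ Subtype.val_injective]
  have hT1 : ∀ a ∈ T1, ∀ b ∈ T1, G1.Adj a b → (a = x ∧ b = y) ∨ (a = y ∧ b = x) :=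
    fun a ha b hb hab => by_contra fun h =>
      hT.not_adj ha hb (oreCompose_adj_inl_inl.mpr ⟨hab, h⟩)
  have hT2 : G2.IsIndepSet T2 := by
    rintro - ⟨u, hu, rfl⟩ - ⟨w, hw, rfl⟩ - huw
    exact hT.not_adj hu hw (oreCompose_adj_inr_inr.mpr huw)
  by_cases hxy : x ∈ T1 ∧ y ∈ T1
  · -- every neighbour of `z` in `G2` is adjacent to `x` or `y`, so `z` can join `T2`
    obtain ⟨hx, hy⟩ := hxy
    have hz : ∀ w ∈ T2, ¬ G2.Adj z w := by
      rintro - ⟨w, hw, rfl⟩ hzw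
      by_cases hA : w.1 ∈ A
      · exact hT.not_adj hx hw (oreCompose_adj_inl_inr.mpr (Or.inl ⟨rfl, hzw, hA⟩))
      · exact hT.not_adj hy hw (oreCompose_adj_inl_inr.mpr (Or.inr ⟨rfl, hzw, hA⟩))
    refine ⟨T1 \ {y}, insert z T2, ?_, Set.pairwise_insert.mpr
      ⟨hT2, fun w hw _ => ⟨hz w hw, fun hwz => hz w hw hwz.symm⟩⟩, ?_⟩
    · rintro a ⟨ha, hay⟩ b ⟨hb, hby⟩ - hab
      rcases hT1 a ha b hb hab with ⟨-, rfl⟩ | ⟨rfl, -⟩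
      exacts [hby rfl, hay rfl]
    · have hzT2 : z ∉ T2 := fun ⟨w, _, hw⟩ => w.2 hw
      rw [Set.ncard_insert_of_notMem hzT2, hcard, ← Set.ncard_sdiff_singleton_add_one hy]
      omega
  · refine ⟨T1, T2, ?_, hT2, hcard.le⟩
    rintro a ha b hb - hab
    rcases hT1 a ha b hb hab with ⟨rfl, rfl⟩ | ⟨rfl, rfl⟩
    exacts [hxy ⟨ha, hb⟩, hxy ⟨hb, ha⟩]


variable (z) in
def oreEdgeMap : Sym2 (V1 ⊕ {v : V2 // v ≠ z}) → Sym2 V1 ⊕ Sym2 V2 :=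
  Sym2.lift ⟨fun a b =>
    match a, b with
    | Sum.inl u, Sum.inl v => Sum.inl s(u, v)
    | Sum.inl _, Sum.inr w => Sum.inr s(z, w.1)
    | Sum.inr w, Sum.inl _ => Sum.inr s(z, w.1)
    | Sum.inr w1, Sum.inr w2 => Sum.inr s(w1.1, w2.1),
   by rintro (u | w) (v | w') <;> simp [Sym2.eq_swap]⟩

@[simp] theorem oreEdgeMap_inl_inl (u v : V1) :
    oreEdgeMap (V2 := V2) z s(Sum.inl u, Sum.inl v) = Sum.inl s(u, v) := rfl

@[simp] theorem oreEdgeMap_inl_inr (u : V1) (w : {v : V2 // v ≠ z}) :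
    oreEdgeMap z s(Sum.inl u, Sum.inr w) = Sum.inr s(z, w.1) := rfl

@[simp] theorem oreEdgeMap_inr_inr (w1 w2 : {v : V2 // v ≠ z}) :
    oreEdgeMap (V1 := V1) z s(Sum.inr w1, Sum.inr w2) = Sum.inr s(w1.1, w2.1) := rfl

theorem oreCompose_edge_cases {E : Sym2 (V1 ⊕ {v : V2 // v ≠ z})}
    (hE : E ∈ (oreCompose G1 G2 x y z A).edgeSet) :
    (∃ u v, E = s(Sum.inl u, Sum.inl v) ∧ G1.Adj u v ∧
        ¬((u = x ∧ v = y) ∨ (u = y ∧ v = x))) ∨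
    (∃ u w, E = s(Sum.inl u, Sum.inr w) ∧
        ((u = x ∧ G2.Adj z w ∧ w.1 ∈ A) ∨ (u = y ∧ G2.Adj z w ∧ w.1 ∉ A))) ∨
    (∃ w1 w2, E = s(Sum.inr w1, Sum.inr w2) ∧ G2.Adj w1 w2) := by
  induction E using Sym2.ind with
  | _ a b =>
    rw [mem_edgeSet] at hE
    rcases a with u | w <;> rcases b with v | w'
    · exact Or.inl ⟨u, v, rfl, oreCompose_adj_inl_inl.mp hE⟩
    · exact Or.inr (Or.inl ⟨u, w', rfl, oreCompose_adj_inl_inr.mp hE⟩)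
    · exact Or.inr (Or.inl ⟨v, w, Sym2.eq_swap, oreCompose_adj_inl_inr.mp hE.symm⟩)
    · exact Or.inr (Or.inr ⟨w, w', rfl, oreCompose_adj_inr_inr.mp hE⟩)

theorem oreEdgeMap_mapsTo :
    Set.MapsTo (oreEdgeMap z) (oreCompose G1 G2 x y z A).edgeSet
      (Sum.inl '' (G1.edgeSet \ {s(x, y)}) ∪ Sum.inr '' G2.edgeSet) := by
  intro E hE
  rcases oreCompose_edge_cases hE with
    ⟨u, v, rfl, huv, hxy⟩ | ⟨u, w, rfl, huw⟩ | ⟨w1, w2, rfl, hw⟩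
  · refine Or.inl ⟨s(u, v), ⟨huv, ?_⟩, rfl⟩
    simpa [Sym2.eq_iff] using hxy
  · rcases huw with ⟨-, hzw, -⟩ | ⟨-, hzw, -⟩ <;> exact Or.inr ⟨s(z, w.1), hzw, rfl⟩
  · exact Or.inr ⟨s(w1.1, w2.1), hw, rfl⟩

theorem oreEdgeMap_injOn : Set.InjOn (oreEdgeMap z) (oreCompose G1 G2 x y z A).edgeSet := by
  intro E1 h1 E2 h2 heq
  rcases oreCompose_edge_cases h1 with
      ⟨u, v, rfl, -⟩ | ⟨u, w, rfl, huw⟩ | ⟨w1, w2, rfl, -⟩ <;>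
    rcases oreCompose_edge_cases h2 with
      ⟨u', v', rfl, -⟩ | ⟨u', w', rfl, huw'⟩ | ⟨w1', w2', rfl, -⟩ <;>
    simp only [oreEdgeMap_inl_inl, oreEdgeMap_inl_inr, oreEdgeMap_inr_inr, Sum.inl.injEq,
      Sum.inr.injEq, reduceCtorEq, Sym2.eq_iff] at heq
  · rcases heq with ⟨rfl, rfl⟩ | ⟨rfl, rfl⟩
    exacts [rfl, Sym2.eq_swap]
  · -- an edge between `V1` and `V2` is determined by its end `w` in `V2`,
    -- since `w ∈ A` decides between `x` and `y`
    obtain rfl : w = w' := by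
      rcases heq with ⟨-, h⟩ | ⟨h, -⟩
      exacts [Subtype.ext h, absurd h.symm w'.2]
    obtain rfl : u = u' := by
      rcases huw with ⟨rfl, -, hA⟩ | ⟨rfl, -, hA⟩ <;>
        rcases huw' with ⟨rfl, -, hA'⟩ | ⟨rfl, -, hA'⟩ <;> first | rfl | contradiction
    rfl
  · rcases heq with ⟨h, -⟩ | ⟨h, -⟩
    exacts [absurd h.symm w1'.2, absurd h.symm w2'.2]
  · rcases heq with ⟨h, -⟩ | ⟨-, h⟩
    exacts [absurd h w1.2, absurd h w2.2]
  · rcases heq with ⟨h1, h2⟩ | ⟨h1, h2⟩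
    · rw [Subtype.ext h1, Subtype.ext h2]
    · rw [Subtype.ext h1, Subtype.ext h2, Sym2.eq_swap]

theorem oreEdgeMap_surjOn :
    Set.SurjOn (oreEdgeMap z) (oreCompose G1 G2 x y z A).edgeSet
      (Sum.inl '' (G1.edgeSet \ {s(x, y)}) ∪ Sum.inr '' G2.edgeSet) := by
  rintro - (⟨E, ⟨hE, hxy⟩, rfl⟩ | ⟨E, hE, rfl⟩)
  · induction E using Sym2.ind with
    | _ u v =>
      refine ⟨s(Sum.inl u, Sum.inl v), ?_, rfl⟩
      rw [mem_edgeSet, oreCompose_adj_inl_inl]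
      exact ⟨hE, fun h => hxy (by simp only [Set.mem_singleton_iff, Sym2.eq_iff]; tauto)⟩
  have seam : ∀ b, G2.Adj z b → Sum.inr s(z, b) ∈
      oreEdgeMap z '' (oreCompose G1 G2 x y z A).edgeSet := by
    intro b hzb
    by_cases hA : b ∈ A
    · refine ⟨s(Sum.inl x, Sum.inr ⟨b, hzb.ne.symm⟩), ?_, rfl⟩
      exact (mem_edgeSet _).mpr (oreCompose_adj_inl_inr.mpr (Or.inl ⟨rfl, hzb, hA⟩))
    · refine ⟨s(Sum.inl y, Sum.inr ⟨b, hzb.ne.symm⟩), ?_, rfl⟩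
      exact (mem_edgeSet _).mpr (oreCompose_adj_inl_inr.mpr (Or.inr ⟨rfl, hzb, hA⟩))
  induction E using Sym2.ind with
  | _ a b =>
    rw [mem_edgeSet] at hE
    by_cases ha : a = z
    · subst ha
      exact seam b hE
    by_cases hb : b = z
    · subst hb
      rw [Sym2.eq_swap]
      exact seam a hE.symm
    exact ⟨s(Sum.inr ⟨a, ha⟩, Sum.inr ⟨b, hb⟩),
      (mem_edgeSet _).mpr (oreCompose_adj_inr_inr.mpr hE), rfl⟩

theorem numEdges_oreCompose_add_one [Finite V1] [Finite V2] (hxy : G1.Adj x y) :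
    numEdges (oreCompose G1 G2 x y z A) + 1 = numEdges G1 + numEdges G2 := by
  have hbij : Set.BijOn (oreEdgeMap z) (oreCompose G1 G2 x y z A).edgeSet
      (Sum.inl '' (G1.edgeSet \ {s(x, y)}) ∪ Sum.inr '' G2.edgeSet) :=
    ⟨oreEdgeMap_mapsTo, oreEdgeMap_injOn, oreEdgeMap_surjOn⟩
  have hxy' : s(x, y) ∈ G1.edgeSet := hxy
  simp only [numEdges, Nat.card_coe_set_eq]
  rw [← hbij.injOn.ncard_image, hbij.image_eq,
    Set.ncard_union_eq Set.disjoint_image_inl_image_inr,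
    Set.ncard_image_of_injective _ Sum.inl_injective,
    Set.ncard_image_of_injective _ Sum.inr_injective, add_right_comm,
    Set.ncard_sdiff_singleton_add_one hxy']

end OreCompose

namespace IsFourOre

variable {V : Type} {G : SimpleGraph V}

theorem finite (h : IsFourOre G) : Finite V := by
  induction h with
  | k4 G hG =>
    obtain ⟨e⟩ := hG
    exact .of_equiv _ e.toEquiv.symm
  | comp G G1 G2 _ _ hG ih1 ih2 =>
    obtain ⟨x, y, z, A, -, -, -, ⟨e⟩⟩ := hG
    exact .of_equiv _ e.toEquiv.symm

theorem three_mul_numEdges_add_two (h : IsFourOre G) :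
    3 * numEdges G + 2 = 5 * Nat.card V := by
  induction h with
  | k4 G hG =>
    obtain ⟨e⟩ := hG
    have : numEdges G = 6 := by
      rw [numEdges, Nat.card_congr e.mapEdgeSet, Nat.card_eq_fintype_card,
        ← edgeFinset_card, card_edgeFinset_top_eq_card_choose_two]
      rfl
    rw [this, Nat.card_congr e.toEquiv, Nat.card_fin]
  | @comp W W1 W2 G G1 G2 h1 h2 hG ih1 ih2 =>
    obtain ⟨x, y, z, A, hxy, -, -, ⟨e⟩⟩ := hG
    have := h1.finite
    have := h2.finite
    have hE : numEdges G = numEdges (oreCompose G1 G2 x y z A) := Nat.card_congr e.mapEdgeSet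
    have hV : Nat.card W = Nat.card (W1 ⊕ {v // v ≠ z}) := Nat.card_congr e.toEquiv
    have := numEdges_oreCompose_add_one (G2 := G2) (z := z) (A := A) hxy
    have := card_oreCompose_add_one (V1 := W1) z
    omega

theorem three_mul_ncard_add_one_le (h : IsFourOre G) {s : Set V} (hs : G.IsIndepSet s) :
    3 * s.ncard + 1 ≤ Nat.card V := by
  induction h with
  | k4 G hG =>
    obtain ⟨e⟩ := hG
    have := ncard_le_one_of_isIndepSet_of_iso_top e hs
    rw [Nat.card_congr e.toEquiv, Nat.card_fin]
    omega
  | @comp W W1 W2 G G1 G2 h1 h2 hG ih1 ih2 =>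
    obtain ⟨x, y, z, A, -, -, -, ⟨e⟩⟩ := hG
    have := h1.finite
    have := h2.finite
    obtain ⟨S1, S2, hS1, hS2, hcard⟩ := oreCompose_isIndepSet_split (e.isIndepSet_image hs)
    have hV := card_oreCompose_add_one (V1 := W1) z
    have := ih1 hS1
    have := ih2 hS2
    rw [Set.ncard_image_of_injective _ e.injective] at hcard
    rw [Nat.card_congr e.toEquiv]
    omega

theorem card_eq_of_potential_eq (h : IsFourOre G) (hp : potential G = 9 / 5) :
    Nat.card V = 3 * _root_.indepNum (D3 G) + 1 := by
  have hE : (3 * numEdges G + 2 : ℚ) = 5 * Nat.card V := by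
    exact_mod_cast h.three_mul_numEdges_add_two
  rw [potential] at hp
  have : (Nat.card V : ℚ) = 3 * _root_.indepNum (D3 G) + 1 := by linarith
  exact_mod_cast this

end IsFourOre

theorem statement_10_general {V : Type} (G : SimpleGraph V)
    (hOre : IsFourOre G) (hp : potential G = 9/5) (v : V)
    (I : Set V)
    (hIindep : ∀ u ∈ I, ∀ w ∈ I, ¬ G.Adj u w)
    (hImax : I.ncard = _root_.indepNum (D3 G)) :
    ∃ u ∈ I, u = v ∨ G.Adj v u := by
  have := hOre.finite
  by_contra! hI
  have hvI : v ∉ I := fun hv => (hI v hv).1 rfl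
  have hindep : G.IsIndepSet (insert v I) :=
    Set.pairwise_insert.mpr ⟨fun a ha b hb _ => hIindep a ha b hb,
      fun u hu _ => ⟨(hI u hu).2, fun huv => (hI u hu).2 huv.symm⟩⟩
  have hbound := hOre.three_mul_ncard_add_one_le hindep
  rw [Set.ncard_insert_of_notMem hvI, hImax, hOre.card_eq_of_potential_eq hp] at hbound
  omega

/-- If `G` is a `4`-Ore graph with `p(G) = 1.8` and `v` is a vertex
of `G`, then every maximum independent set of `D3(G)` contains a vertex of the
closed neighborhood of `v` in `G`. -/
theorem statement_10 {V : Type} [Fintype V] (G : SimpleGraph V)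
    (hOre : IsFourOre G) (hp : potential G = 9/5) (v : V)
    (I : Set V) (hI3 : I ⊆ D3set G)
    (hIindep : ∀ u ∈ I, ∀ w ∈ I, ¬ G.Adj u w)
    (hImax : I.ncard = _root_.indepNum (D3 G)) :
    ∃ u ∈ I, u = v ∨ G.Adj v u :=
  statement_10_general G hOre hp v I hIindep hImax
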